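/- arXiv:1208.5930 — 2 statements merged into one kernel-verified Lean document; each statement's English description precedes it below -/
import Mathlib

section
/- Let τ_H be any strong stationary time for the chain Q on H, let τ_H(v), v∈G, be conditionally independent copies of τ_H run on the lamp graphs H_v given the local times, and define τ⋄ := inf{t : ∀v∈G, τ_H(v) ≤ L_v(t)}. Then for any starting state (f₀,x₀) and any (f,x), P_{(f₀,x₀)}[X⋄_t = (f,x), τ⋄ = t] = (∏_{v∈G} π_H(f_v)) · P_{(f₀,x₀)}[X_t = x, τ⋄ = t]. Moreover, if τ_H has a halting state h(z) for every initial state z∈H, then for every y∈G the configuration ((h(f_v(0)))_{v∈G}, y) is a halting state for τ⋄ and initial state (f₀,x₀). -/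
open Finset

noncomputable section

open scoped Classical

section MarkovDefs

variable {V : Type*} [Fintype V] [DecidableEq V] [Nonempty V]
variable {W : Type*} [Fintype W] [DecidableEq W] [Nonempty W]

/-- `P` is a stochastic (transition) matrix. -/
def IsTransitionMatrix (P : Matrix V V ℝ) : Prop :=
  (∀ x y, 0 ≤ P x y) ∧ ∀ x, ∑ y, P x y = 1

/-- `π` is a (positive) stationary distribution for `P`. -/
def IsStationaryDist (P : Matrix V V ℝ) (π : V → ℝ) : Prop :=
  (∀ x, 0 < π x) ∧ (∑ x, π x = 1) ∧ ∀ y, ∑ x, π x * P x y = π y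

/-- Reversibility (detailed balance) of `P` with respect to `π`. -/
def IsReversibleMC (P : Matrix V V ℝ) (π : V → ℝ) : Prop :=
  ∀ x y, π x * P x y = π y * P y x

/-- Irreducibility of the chain `P`. -/
def IsIrreducibleMC (P : Matrix V V ℝ) : Prop :=
  ∀ x y, ∃ t : ℕ, 0 < (P ^ t) x y

/-- Aperiodicity of the chain `P`. -/
def IsAperiodicMC (P : Matrix V V ℝ) : Prop :=
  ∀ x : V, ∃ N : ℕ, ∀ n, N ≤ n → 0 < (P ^ n) x x

/-- The chain `P` is lazy. -/
def IsLazyMC (P : Matrix V V ℝ) : Prop := ∀ x, (1:ℝ)/2 ≤ P x x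

/-- The uniform distribution on a finite type. -/
def unifDist (α : Type*) [Fintype α] : α → ℝ := fun _ => (Fintype.card α : ℝ)⁻¹

/-- The second largest eigenvalue of a transition matrix: the supremum of the
eigenvalues different from `1`. -/
def secondEigenvalue (P : Matrix V V ℝ) : ℝ :=
  sSup {r : ℝ | r ≠ 1 ∧ ∃ φ : V → ℝ, φ ≠ 0 ∧ P.mulVec φ = r • φ}

/-- Relaxation time `1/(1-λ₂)`. -/
def relaxationTime (P : Matrix V V ℝ) : ℝ := 1 / (1 - secondEigenvalue P)

/-- Worst-case total variation distance from stationarity at time `t`. -/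
def tvFromStat (P : Matrix V V ℝ) (π : V → ℝ) (t : ℕ) : ℝ :=
  ⨆ x : V, (1/2) * ∑ y, |(P ^ t) x y - π y|

/-- The `ε`-mixing time (in total variation). -/
def mixingTime (P : Matrix V V ℝ) (π : V → ℝ) (ε : ℝ) : ℕ :=
  sInf {t : ℕ | tvFromStat P π t ≤ ε}

/-- Separation distance from initial state `x` at time `t`. -/
def sepDist (P : Matrix V V ℝ) (π : V → ℝ) (x : V) (t : ℕ) : ℝ :=
  ⨆ y : V, (1 - (P ^ t) x y / π y)

/-- Probability that the chain started at `x₀` follows the path `p`. -/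
def pathWeight (P : Matrix V V ℝ) (x₀ : V) {t : ℕ} (p : Fin (t+1) → V) : ℝ :=
  (if p 0 = x₀ then (1:ℝ) else 0) * ∏ i : Fin t, P (p i.castSucc) (p i.succ)

/-- `P_x[τ_y > t]`: the walk started at `x` avoids `y` up to time `t`. -/
def hitGT (P : Matrix V V ℝ) (x y : V) (t : ℕ) : ℝ :=
  ∑ p : Fin (t+1) → V, if ∀ i, p i ≠ y then pathWeight P x p else 0

/-- Expected hitting time `E_x[τ_y]`. -/
def expHit (P : Matrix V V ℝ) (x y : V) : ℝ := ∑' t : ℕ, hitGT P x y t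

/-- Maximal expected hitting time `t_hit`. -/
def maxHitTime (P : Matrix V V ℝ) : ℝ := ⨆ x : V, ⨆ y : V, expHit P x y

/-- `P_x[τ_cov > t]`: the walk started at `x` has not visited every state by time `t`. -/
def coverGT (P : Matrix V V ℝ) (x : V) (t : ℕ) : ℝ :=
  ∑ p : Fin (t+1) → V, if Function.Surjective p then 0 else pathWeight P x p

/-- Expected cover time `E_x[τ_cov]`. -/
def expCover (P : Matrix V V ℝ) (x : V) : ℝ := ∑' t : ℕ, coverGT P x t

/-- The cover time `t_cov`. -/
def coverTime (P : Matrix V V ℝ) : ℝ := ⨆ x : V, expCover P x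

/-- `P_w[R(w) > t]`: tail of the first return time to `w`. -/
def returnGT (P : Matrix V V ℝ) (w : V) (t : ℕ) : ℝ :=
  ∑ p : Fin (t+1) → V, if ∀ i, i ≠ 0 → p i ≠ w then pathWeight P w p else 0

/-- The degree of a vertex. -/
def graphDeg (G : SimpleGraph V) (x : V) : ℕ := (univ.filter fun y => G.Adj x y).card

/-- `G` is a regular graph. -/
def IsRegularGraph (G : SimpleGraph V) : Prop := ∃ d, ∀ x, graphDeg G x = d

/-- The lazy simple random walk on `G`. -/
def lazySRW (G : SimpleGraph V) : Matrix V V ℝ := fun x y =>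
  if x = y then 1/2 else if G.Adj x y then 1 / (2 * (graphDeg G x : ℝ)) else 0

/-- The generalized lamplighter (wreath product) transition matrix on `(V → W) × V`:
move the lamplighter according to `P` and refresh the lamps at the departure and
arrival vertices independently according to `Q` (a double `Q`-update upon holding). -/
def lamplighter (P : Matrix V V ℝ) (Q : Matrix W W ℝ) :
    Matrix ((V → W) × V) ((V → W) × V) ℝ := fun s s' =>
  if s.2 = s'.2 then
    if ∀ z, z ≠ s.2 → s.1 z = s'.1 z then P s.2 s'.2 * (Q * Q) (s.1 s.2) (s'.1 s.2) else 0
  else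
    if ∀ z, z ≠ s.2 → z ≠ s'.2 → s.1 z = s'.1 z then
      P s.2 s'.2 * Q (s.1 s.2) (s'.1 s.2) * Q (s.1 s'.2) (s'.1 s'.2)
    else 0

/-- The product stationary distribution `π⋄((f,x)) = π_G(x) ∏_v π_H(f_v)`. -/
def lampStat (πG : V → ℝ) (πH : W → ℝ) : ((V → W) × V) → ℝ :=
  fun s => πG s.2 * ∏ v, πH (s.1 v)

/-- The local time `L_v(t) = 2 Σ_{i≤t} 1(X_i = v) - δ_{X_0,v} - δ_{X_t,v}`, i.e. the
number of lamp-moves at `v` along the base path `p` up to time `t`. -/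
def localTime {t : ℕ} (p : Fin (t+1) → V) (v : V) : ℕ :=
  2 * (univ.filter fun i => p i = v).card
    - (if p 0 = v then 1 else 0) - (if p (Fin.last t) = v then 1 else 0)

/-- Truncation (for `s ≤ t`) of a path to the time-interval `[0,s]`. -/
def truncPath {t : ℕ} (p : Fin (t+1) → V) (s : ℕ) : Fin (s+1) → V :=
  fun i => p ⟨min (i : ℕ) t, Nat.lt_succ_of_le (Nat.min_le_right _ _)⟩

/-- Extension of a finite path to all times (constant after time `n`). -/
def extendPath {n : ℕ} (z : Fin (n+1) → W) : ℕ → W :=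
  fun i => z ⟨min i n, Nat.lt_succ_of_le (Nat.min_le_right _ _)⟩

/-- The history (list of states) of the trajectory `z` up to time `k`. -/
def ruleHist (z : ℕ → W) (k : ℕ) : List W := List.ofFn fun i : Fin (k+1) => z (i : ℕ)

/-- A randomized stopping rule: `r h` is the conditional probability of stopping
right now given that the history so far is `h` and we have not yet stopped. -/
def IsStoppingRule (r : List W → ℝ) : Prop := ∀ h, 0 ≤ r h ∧ r h ≤ 1

/-- `P[τ ≤ m | trajectory z]` for the stopping rule `r`. -/
def stopBy (r : List W → ℝ) (z : ℕ → W) (m : ℕ) : ℝ :=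
  1 - ∏ k ∈ Finset.range (m+1), (1 - r (ruleHist z k))

/-- `P[τ < m | trajectory z]` for the stopping rule `r`. -/
def stopLT (r : List W → ℝ) (z : ℕ → W) (m : ℕ) : ℝ :=
  1 - ∏ k ∈ Finset.range m, (1 - r (ruleHist z k))

/-- `P_{w₀}[X_t = y, τ = t]` for the chain `Q` and the stopping rule `r`. -/
def stopAtProb (Q : Matrix W W ℝ) (r : List W → ℝ) (w₀ : W) (t : ℕ) (y : W) : ℝ :=
  ∑ z : Fin (t+1) → W,
    if z (Fin.last t) = y then
      pathWeight Q w₀ z * (∏ k ∈ Finset.range t, (1 - r (ruleHist (extendPath z) k))) *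
        r (ruleHist (extendPath z) t)
    else 0

/-- `P_{w₀}[X_t = y, τ > t]` for the chain `Q` and the stopping rule `r`. -/
def notStopProbAt (Q : Matrix W W ℝ) (r : List W → ℝ) (w₀ : W) (t : ℕ) (y : W) : ℝ :=
  ∑ z : Fin (t+1) → W,
    if z (Fin.last t) = y then
      pathWeight Q w₀ z * ∏ k ∈ Finset.range (t+1), (1 - r (ruleHist (extendPath z) k))
    else 0

/-- `r` is (the stopping rule of) a strong stationary time for `(Q, π)`. -/
def IsSST (Q : Matrix W W ℝ) (π : W → ℝ) (r : List W → ℝ) : Prop :=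
  IsStoppingRule r ∧ ∀ w₀ t y, stopAtProb Q r w₀ t y = π y * ∑ y', stopAtProb Q r w₀ t y'

/-- `h` is a halting state for the stopping rule `r` and initial state `w₀`:
being at `h` at time `t` implies having stopped. -/
def IsHaltingState (Q : Matrix W W ℝ) (r : List W → ℝ) (w₀ h : W) : Prop :=
  ∀ t, notStopProbAt Q r w₀ t h = 0

/-- A separation-optimal strong stationary time: its tail equals the separation
distance for every starting state. -/
def IsSepOptimal (Q : Matrix W W ℝ) (π : W → ℝ) (r : List W → ℝ) : Prop :=
  ∀ w₀ t, sepDist Q π w₀ t = ∑ y, notStopProbAt Q r w₀ t y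

/-! Joint description of the generalized lamplighter chain: a base path `p` on `V`
together with independent `Q`-trajectories `z v` on each lamp coordinate `v`; the lamp
configuration at time `s` reads off each `z v` at the local time `L_v(s)`. -/

/-- Weight of a joint configuration (base path, lamp trajectories). -/
def jointWeight (P : Matrix V V ℝ) (Q : Matrix W W ℝ) (f₀ : V → W) (x₀ : V) {t : ℕ}
    (p : Fin (t+1) → V) (z : V → (Fin (2*t+1) → W)) : ℝ :=
  pathWeight P x₀ p * ∏ v, pathWeight Q (f₀ v) (z v)

/-- The lamp configuration at time `s` along the joint path: `F_s(v) = Z_v(L_v(s))`. -/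
def lampAt {t : ℕ} (p : Fin (t+1) → V) (z : V → (Fin (2*t+1) → W)) (s : ℕ) (v : V) : W :=
  z v ⟨min (localTime (truncPath p s) v) (2*t), Nat.lt_succ_of_le (Nat.min_le_right _ _)⟩

/-- `P_{(f₀,x₀)}[X⋄_t = (f,x), τ⋄ ≤ s]`, where
`τ⋄ = inf{u : ∀ v, τ_H(v) ≤ L_v(u)}` is built from conditionally independent copies
`τ_H(v)` (with stopping rule `r`) on the lamp coordinates. -/
def tauDmdLEProb (P : Matrix V V ℝ) (Q : Matrix W W ℝ) (r : List W → ℝ)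
    (f₀ : V → W) (x₀ : V) (t s : ℕ) (f : V → W) (x : V) : ℝ :=
  ∑ p : Fin (t+1) → V, ∑ z : V → (Fin (2*t+1) → W),
    if p (Fin.last t) = x ∧ ∀ v, lampAt p z t v = f v then
      jointWeight P Q f₀ x₀ p z *
        ∏ v, stopBy r (extendPath (z v)) (localTime (truncPath p s) v)
    else 0

/-- `P_{(f₀,x₀)}[X⋄_t = (f,x), τ⋄ = t]`. -/
def tauDmdEqProb (P : Matrix V V ℝ) (Q : Matrix W W ℝ) (r : List W → ℝ)
    (f₀ : V → W) (x₀ : V) (t : ℕ) (f : V → W) (x : V) : ℝ :=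
  tauDmdLEProb P Q r f₀ x₀ t t f x -
    if t = 0 then 0 else tauDmdLEProb P Q r f₀ x₀ t (t-1) f x

/-- `P_{(f₀,x₀)}[X_t = x, τ⋄ ≤ s]` (base-walk marginal). -/
def tauDmdLEBase (P : Matrix V V ℝ) (Q : Matrix W W ℝ) (r : List W → ℝ)
    (f₀ : V → W) (x₀ : V) (t s : ℕ) (x : V) : ℝ :=
  ∑ p : Fin (t+1) → V, ∑ z : V → (Fin (2*t+1) → W),
    if p (Fin.last t) = x then
      jointWeight P Q f₀ x₀ p z *
        ∏ v, stopBy r (extendPath (z v)) (localTime (truncPath p s) v)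
    else 0

/-- `P_{(f₀,x₀)}[X_t = x, τ⋄ = t]` (base-walk marginal). -/
def tauDmdEqBase (P : Matrix V V ℝ) (Q : Matrix W W ℝ) (r : List W → ℝ)
    (f₀ : V → W) (x₀ : V) (t : ℕ) (x : V) : ℝ :=
  tauDmdLEBase P Q r f₀ x₀ t t x -
    if t = 0 then 0 else tauDmdLEBase P Q r f₀ x₀ t (t-1) x

/-- `P_{(f₀,x₀)}[τ⋄ > t]`. -/
def tauDmdGTProb (P : Matrix V V ℝ) (Q : Matrix W W ℝ) (r : List W → ℝ)
    (f₀ : V → W) (x₀ : V) (t : ℕ) : ℝ :=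
  ∑ p : Fin (t+1) → V, ∑ z : V → (Fin (2*t+1) → W),
    jointWeight P Q f₀ x₀ p z * (1 - ∏ v, stopBy r (extendPath (z v)) (localTime p v))

/-- `P_{(f₀,x₀)}[X⋄_t = (f,x), τ⋄ > t]`. -/
def tauDmdGTProbAt (P : Matrix V V ℝ) (Q : Matrix W W ℝ) (r : List W → ℝ)
    (f₀ : V → W) (x₀ : V) (t : ℕ) (f : V → W) (x : V) : ℝ :=
  ∑ p : Fin (t+1) → V, ∑ z : V → (Fin (2*t+1) → W),
    if p (Fin.last t) = x ∧ ∀ v, lampAt p z t v = f v then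
      jointWeight P Q f₀ x₀ p z * (1 - ∏ v, stopBy r (extendPath (z v)) (localTime p v))
    else 0

/-- `P_{(g,y)}[X⋄_m = (f,x), τ_G = m]`, where the stopping rule `rG` acts on the
base path of the lamplighter chain. -/
def baseStopProb (P : Matrix V V ℝ) (Q : Matrix W W ℝ) (rG : List V → ℝ)
    (g : V → W) (y : V) (m : ℕ) (f : V → W) (x : V) : ℝ :=
  ∑ p : Fin (m+1) → V, ∑ z : V → (Fin (2*m+1) → W),
    if p (Fin.last m) = x ∧ ∀ v, lampAt p z m v = f v then
      jointWeight P Q g y p z *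
        (∏ k ∈ Finset.range m, (1 - rG (ruleHist (extendPath p) k))) *
        rG (ruleHist (extendPath p) m)
    else 0

/-- `P_{(f₀,x₀)}[X⋄_t = (f,x), τ⋄₂ = t]` for `τ⋄₂ = τ⋄ + τ_G(X_{τ⋄})`, where after
`τ⋄` the chain is restarted and run independently of the past. -/
def tauDmd2EqProb (P : Matrix V V ℝ) (Q : Matrix W W ℝ) (r : List W → ℝ) (rG : List V → ℝ)
    (f₀ : V → W) (x₀ : V) (t : ℕ) (f : V → W) (x : V) : ℝ :=
  ∑ s ∈ Finset.range (t+1), ∑ g : V → W, ∑ y : V,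
    tauDmdEqProb P Q r f₀ x₀ s g y * baseStopProb P Q rG g y (t - s) f x

/-- `P_x[τ > t]` for a stopping rule on the chain `P`. -/
def stopGTProb (P : Matrix V V ℝ) (r : List V → ℝ) (x : V) (t : ℕ) : ℝ :=
  ∑ y, notStopProbAt P r x t y

/-- `E_x[τ]` for a stopping rule on the chain `P`. -/
def expStopTime (P : Matrix V V ℝ) (r : List V → ℝ) (x : V) : ℝ :=
  ∑' t : ℕ, stopGTProb P r x t

/-- `P_x[X_τ = y]` for a stopping rule on the chain `P`. -/
def stopRuleDist (P : Matrix V V ℝ) (r : List V → ℝ) (x : V) (y : V) : ℝ :=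
  ∑' t : ℕ, stopAtProb P r x t y

/-- `t_stop`: the worst-case over starting states of the optimal expected duration of a
(randomized) stopping rule whose stopping distribution is the stationary one
(Lovász–Winkler). -/
def tStop (P : Matrix V V ℝ) (π : V → ℝ) : ℝ :=
  ⨆ x : V, sInf {e : ℝ | ∃ r : List V → ℝ, IsStoppingRule r ∧
    (∀ y, stopRuleDist P r x y = π y) ∧ expStopTime P r x = e}

/-- The path `p` visits every vertex by time `t/3`. -/
def coveredByThird {t : ℕ} (p : Fin (t+1) → V) : Prop :=
  ∀ v : V, ∃ i : Fin (t+1), (i : ℝ) ≤ (t : ℝ) / 3 ∧ p i = v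

end MarkovDefs

/-!
Given the base path, the lamps evolve as independent `Q`-chains, the one at `v` making `L_v(t)`
moves by time `t`, and `τ⋄ ≤ s` means that every copy `τ_H(v)` has stopped by `L_v(s) ≤ L_v(t)`.
Hence the sum over lamp trajectories factors over `v`, and it suffices to show, for one chain
`Z` with strong stationary time `τ`, that `P[Z_n = w, τ ≤ m] = π(w) P[τ ≤ m]` when `m ≤ n`.
Split on the value `k ≤ m` of `τ`: at time `k` the state is `π`-distributed independently of
`{τ = k}`, and `π` is preserved by the remaining `n - k` steps.

For the halting statement: a lamp at its halting state at time `L_v(t)` has stopped, so on every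
configuration of positive weight in which all lamps sit at their halting states, `τ⋄ ≤ t`.
-/

section PathSums

open Matrix

variable {α : Type*}

@[simp]
lemma truncPath_self {n : ℕ} (ζ : Fin (n+1) → α) : truncPath ζ n = ζ :=
  funext fun i => congrArg ζ (Fin.ext (min_eq_left (Fin.is_le i)))

lemma truncPath_truncPath {n m k : ℕ} (hkm : k ≤ m) (ζ : Fin (n+1) → α) :
    truncPath (truncPath ζ m) k = truncPath ζ k := by
  funext i
  simp only [truncPath]
  congr 2
  have := i.is_le
  omega

lemma truncPath_snoc {n k : ℕ} (h : k ≤ n) (η : Fin (n+1) → α) (w : α) :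
    truncPath (Fin.snoc η w : Fin (n+2) → α) k = truncPath η k := by
  funext i
  have hi := i.is_le
  have : (⟨min (i : ℕ) (n + 1), Nat.lt_succ_of_le (Nat.min_le_right _ _)⟩ : Fin (n+2))
      = Fin.castSucc ⟨min (i : ℕ) n, Nat.lt_succ_of_le (Nat.min_le_right _ _)⟩ := by
    ext; simp; omega
  simp only [truncPath, this, Fin.snoc_castSucc]

lemma extendPath_truncPath {n k : ℕ} (ζ : Fin (n+1) → α) {i : ℕ} (hi : i ≤ k) :
    extendPath (truncPath ζ k) i = extendPath ζ i := by
  simp only [extendPath, truncPath]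
  congr 2
  omega

lemma sum_fun_fin_succ_eq_sum_snoc [Fintype α] {M : Type*} [AddCommMonoid M] (n : ℕ)
    (g : (Fin (n+2) → α) → M) :
    ∑ ζ : Fin (n+2) → α, g ζ = ∑ η : Fin (n+1) → α, ∑ w : α, g (Fin.snoc η w) := by
  rw [← (Fin.snocEquiv fun _ => α).sum_comp, Fintype.sum_prod_type, sum_comm]
  rfl

lemma pathWeight_snoc [DecidableEq α] (Q : Matrix α α ℝ) (a : α) {n : ℕ} (η : Fin (n+1) → α)
    (w : α) :
    pathWeight Q a (Fin.snoc η w : Fin (n+2) → α) = pathWeight Q a η * Q (η (Fin.last n)) w := by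
  simp only [pathWeight, Fin.prod_univ_castSucc, Fin.succ_castSucc, Fin.snoc_castSucc,
    Fin.succ_last, Fin.snoc_last]
  have h0 : (Fin.snoc η w : Fin (n+2) → α) 0 = η 0 := Fin.snoc_castSucc (α := fun _ => α) w η 0
  rw [h0]
  ring

lemma pathWeight_nonneg [DecidableEq α] {Q : Matrix α α ℝ} (hQ : ∀ x y, 0 ≤ Q x y) (a : α)
    {n : ℕ} (ζ : Fin (n+1) → α) : 0 ≤ pathWeight Q a ζ :=
  mul_nonneg (by split_ifs <;> norm_num) (prod_nonneg fun _ _ => hQ _ _)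

variable [Fintype α] [DecidableEq α]

/-- The Markov property in path form: the last `d` steps act on a function of the final state
as `Q ^ d`. -/
lemma sum_pathWeight_mul_last (Q : Matrix α α ℝ) (a : α) (k d : ℕ)
    (g : (Fin (k+1) → α) → ℝ) (φ : α → ℝ) :
    ∑ η : Fin (k+d+1) → α,
        pathWeight Q a η * g (truncPath η k) * φ (η (Fin.last (k+d)))
      = ∑ θ : Fin (k+1) → α, pathWeight Q a θ * g θ * (Q ^ d *ᵥ φ) (θ (Fin.last k)) := by
  induction d generalizing φ with
  | zero => simp
  | succ d ih =>
    rw [pow_succ, ← mulVec_mulVec, ← ih]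
    refine (sum_fun_fin_succ_eq_sum_snoc (k + d) _).trans (sum_congr rfl fun η _ => ?_)
    simp only [pathWeight_snoc, mulVec, dotProduct, mul_sum]
    refine sum_congr rfl fun w _ => ?_
    erw [Fin.snoc_last, truncPath_snoc (Nat.le_add_right k d) η w]
    ring

lemma sum_pathWeight_mul_apply {Q : Matrix α α ℝ} (hQ : Q ∈ rowStochastic ℝ α) (a : α)
    {k n N : ℕ} (hkn : k ≤ n) (hnN : n ≤ N) (g : (Fin (k+1) → α) → ℝ) (φ : α → ℝ) :
    ∑ ζ : Fin (N+1) → α,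
        pathWeight Q a ζ * g (truncPath ζ k) * φ (ζ ⟨n, Nat.lt_succ_of_le hnN⟩)
      = ∑ θ : Fin (k+1) → α, pathWeight Q a θ * g θ * (Q ^ (n - k) *ᵥ φ) (θ (Fin.last k)) := by
  obtain ⟨d, rfl⟩ := Nat.exists_eq_add_of_le hnN
  obtain ⟨e, rfl⟩ := Nat.exists_eq_add_of_le hkn
  have hcut := sum_pathWeight_mul_last Q a (k + e) d
    (fun η => g (truncPath η k) * φ (η (Fin.last (k + e)))) 1
  have hlast : ∀ ζ : Fin (k + e + d + 1) → α,
      truncPath ζ (k + e) (Fin.last (k + e)) = ζ ⟨k + e, Nat.lt_succ_of_le hnN⟩ := fun ζ =>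
    congrArg ζ (Fin.ext (min_eq_left hnN))
  rw [one_vecMul_of_mem_rowStochastic (pow_mem hQ d)] at hcut
  simp only [Pi.one_apply, mul_one, truncPath_truncPath hkn, hlast, ← mul_assoc] at hcut
  rw [Nat.add_sub_cancel_left, ← sum_pathWeight_mul_last]
  exact hcut

lemma vecMul_pow_eq_self {π : α → ℝ} {Q : Matrix α α ℝ} (h : π ᵥ* Q = π) (d : ℕ) :
    π ᵥ* Q ^ d = π := by
  induction d with
  | zero => simp
  | succ d ih => rw [pow_succ, ← vecMul_vecMul, ih, h]

lemma sum_mul_apply_last_eq_sum_fiberwise {k : ℕ} (F : (Fin (k+1) → α) → ℝ) (ψ : α → ℝ) :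
    ∑ θ : Fin (k+1) → α, F θ * ψ (θ (Fin.last k))
      = ∑ u, (∑ θ : Fin (k+1) → α, if θ (Fin.last k) = u then F θ else 0) * ψ u := by
  simp only [sum_mul, ite_mul, zero_mul]
  rw [sum_comm]
  simp

end PathSums

section StoppingRules

open Matrix

variable {W : Type*}

/-- `P[τ = k | trajectory z]` for the stopping rule `r`. -/
def stopDensity (r : List W → ℝ) (z : ℕ → W) (k : ℕ) : ℝ :=
  (∏ j ∈ range k, (1 - r (ruleHist z j))) * r (ruleHist z k)

lemma stopBy_eq_sum_stopDensity (r : List W → ℝ) (z : ℕ → W) (m : ℕ) :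
    stopBy r z m = ∑ k ∈ range (m+1), stopDensity r z k := by
  induction m with
  | zero => simp [stopBy, stopDensity]
  | succ m ih =>
    rw [sum_range_succ, ← ih]
    simp only [stopBy, stopDensity, prod_range_succ _ (m+1)]
    ring

lemma ruleHist_congr {z z' : ℕ → W} {k : ℕ} (h : ∀ i ≤ k, z i = z' i) :
    ruleHist z k = ruleHist z' k :=
  congrArg List.ofFn (funext fun i => h i (Fin.is_le i))

lemma prod_one_sub_ruleHist_congr (r : List W → ℝ) {z z' : ℕ → W} {k : ℕ}
    (h : ∀ i ≤ k, z i = z' i) (m : ℕ) (hm : m ≤ k + 1) :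
    ∏ j ∈ range m, (1 - r (ruleHist z j)) = ∏ j ∈ range m, (1 - r (ruleHist z' j)) :=
  prod_congr rfl fun j hj => by
    rw [ruleHist_congr fun i hi => h i (by simp at hj; omega)]

lemma stopDensity_congr (r : List W → ℝ) {z z' : ℕ → W} {k : ℕ} (h : ∀ i ≤ k, z i = z' i) :
    stopDensity r z k = stopDensity r z' k := by
  rw [stopDensity, stopDensity, prod_one_sub_ruleHist_congr r h k (by omega), ruleHist_congr h]

variable [Fintype W] [DecidableEq W] {Q : Matrix W W ℝ} {π : W → ℝ} {r : List W → ℝ}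

lemma stopAtProb_eq_sum_stopDensity (w₀ : W) (k : ℕ) (u : W) :
    stopAtProb Q r w₀ k u = ∑ θ : Fin (k+1) → W,
      if θ (Fin.last k) = u then pathWeight Q w₀ θ * stopDensity r (extendPath θ) k else 0 := by
  simp only [stopAtProb, stopDensity, mul_assoc]

/-- Strong stationarity at time `k` persists at every later time `n`, because stationarity of
`π` is preserved by `Q ^ (n - k)`. -/
lemma IsSST.sum_pathWeight_stopDensity_mul (hQ : IsTransitionMatrix Q) (hπ : π ᵥ* Q = π)
    (hr : IsSST Q π r) (w₀ : W) {k n N : ℕ} (hkn : k ≤ n) (hnN : n ≤ N) (φ : W → ℝ) :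
    ∑ ζ : Fin (N+1) → W,
        pathWeight Q w₀ ζ * stopDensity r (extendPath ζ) k * φ (ζ ⟨n, Nat.lt_succ_of_le hnN⟩)
      = (∑ u, stopAtProb Q r w₀ k u) * (π ⬝ᵥ φ) := by
  have hprefix : ∀ ζ : Fin (N+1) → W, stopDensity r (extendPath ζ) k
      = stopDensity r (extendPath (truncPath ζ k)) k := fun ζ =>
    stopDensity_congr r fun i hi => (extendPath_truncPath ζ hi).symm
  rw [sum_congr rfl fun ζ _ => by rw [hprefix ζ],
    sum_pathWeight_mul_apply (mem_rowStochastic_iff_sum.mpr hQ) w₀ hkn hnN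
      (fun θ => stopDensity r (extendPath θ) k) φ, sum_mul_apply_last_eq_sum_fiberwise]
  simp only [← stopAtProb_eq_sum_stopDensity]
  rw [sum_congr rfl fun u _ => by rw [hr.2 w₀ k u, mul_comm (π u), mul_assoc],
    ← mul_sum, ← dotProduct, dotProduct_mulVec, vecMul_pow_eq_self hπ]

lemma IsSST.sum_ite_pathWeight_stopBy (hQ : IsTransitionMatrix Q) (hπ : IsStationaryDist Q π)
    (hr : IsSST Q π r) (w₀ w : W) {m n N : ℕ} (hmn : m ≤ n) (hnN : n ≤ N) :
    ∑ ζ : Fin (N+1) → W, (if ζ ⟨n, Nat.lt_succ_of_le hnN⟩ = w then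
        pathWeight Q w₀ ζ * stopBy r (extendPath ζ) m else 0)
      = π w * ∑ ζ : Fin (N+1) → W, pathWeight Q w₀ ζ * stopBy r (extendPath ζ) m := by
  have hπQ : π ᵥ* Q = π := funext hπ.2.2
  have key : ∀ φ : W → ℝ, ∑ ζ : Fin (N+1) → W,
      pathWeight Q w₀ ζ * stopBy r (extendPath ζ) m * φ (ζ ⟨n, Nat.lt_succ_of_le hnN⟩)
        = (∑ k ∈ range (m+1), ∑ u, stopAtProb Q r w₀ k u) * (π ⬝ᵥ φ) := fun φ => by
    rw [sum_mul, ← sum_congr rfl fun k hk =>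
      hr.sum_pathWeight_stopDensity_mul hQ hπQ w₀ (k := k) (by simp at hk; omega) hnN φ]
    simp only [stopBy_eq_sum_stopDensity, mul_sum, sum_mul]
    exact sum_comm
  have hone := key 1
  have hsingle := key (Pi.single w 1)
  simp only [Pi.one_apply, mul_one, dotProduct_one, hπ.2.1] at hone
  simp only [Pi.single_apply, mul_ite, mul_one, mul_zero, dotProduct_single_one] at hsingle
  rw [hsingle, hone, mul_comm]

/-- A halting state forces the rule to have stopped: the trajectories that reach it without
stopping carry total weight `notStopProbAt = 0`. -/
lemma stopBy_eq_one_of_isHaltingState (hQ : IsTransitionMatrix Q) (hr : IsStoppingRule r)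
    {w₀ h : W} (hh : IsHaltingState Q r w₀ h) {n N : ℕ} (hnN : n ≤ N) (ζ : Fin (N+1) → W)
    (hζ : ζ ⟨n, Nat.lt_succ_of_le hnN⟩ = h) (hpw : pathWeight Q w₀ ζ ≠ 0) :
    stopBy r (extendPath ζ) n = 1 := by
  set notStopped : (Fin (n+1) → W) → ℝ :=
    fun θ => ∏ k ∈ range (n+1), (1 - r (ruleHist (extendPath θ) k)) with hnotStopped
  have hsum : ∑ ζ' : Fin (N+1) → W, pathWeight Q w₀ ζ' * notStopped (truncPath ζ' n)
      * (if ζ' ⟨n, Nat.lt_succ_of_le hnN⟩ = h then 1 else 0) = 0 := by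
    rw [sum_pathWeight_mul_apply (mem_rowStochastic_iff_sum.mpr hQ) w₀ le_rfl hnN _
      fun u => if u = h then 1 else 0]
    simpa [Matrix.one_apply, notStopProbAt, mul_ite, hnotStopped] using hh n
  have hnonneg : ∀ θ : Fin (n+1) → W, 0 ≤ notStopped θ := fun θ =>
    prod_nonneg fun k _ => sub_nonneg.mpr (hr _).2
  have hterm := (sum_eq_zero_iff_of_nonneg fun ζ' _ => mul_nonneg
    (mul_nonneg (pathWeight_nonneg hQ.1 w₀ ζ') (hnonneg _)) (by positivity)).mp hsum ζ (mem_univ ζ)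
  rw [if_pos hζ, mul_one, mul_eq_zero, or_iff_right hpw, hnotStopped] at hterm
  rw [stopBy, prod_one_sub_ruleHist_congr r (z' := extendPath (truncPath ζ n))
    (fun i hi => (extendPath_truncPath ζ hi).symm) _ le_rfl, sub_eq_self]
  exact hterm

end StoppingRules

section LocalTime

variable {V : Type*}

lemma two_mul_sum_range_succ_sub (e : ℕ → ℕ) (s : ℕ) :
    2 * ∑ i ∈ range (s+1), e i - e 0 - e s = ∑ i ∈ range s, (e i + e (i+1)) := by
  induction s with
  | zero => simp only [zero_add, sum_range_one, range_zero, sum_empty]; omega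
  | succ s ih =>
    have h0 : e 0 ≤ ∑ i ∈ range (s+1), e i := single_le_sum (fun _ _ => Nat.zero_le _) (by simp)
    have hs : e s ≤ ∑ i ∈ range (s+1), e i := single_le_sum (fun _ _ => Nat.zero_le _) (by simp)
    rw [sum_range_succ e (s+1), sum_range_succ (fun i => e i + e (i+1)) s, ← ih]
    omega

/-- The local time counts the lamp moves at `v`: step `i → i+1` moves the lamps at both
endpoints. -/
lemma localTime_truncPath [DecidableEq V] {t : ℕ} (p : Fin (t+1) → V) (v : V) (s : ℕ) :
    localTime (truncPath p s) v = ∑ i ∈ range s,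
      ((if extendPath p i = v then 1 else 0) + (if extendPath p (i+1) = v then 1 else 0)) := by
  rw [← two_mul_sum_range_succ_sub, localTime, card_filter,
    ← Fin.sum_univ_eq_sum_range (fun i => if extendPath p i = v then 1 else 0)]
  rfl

lemma localTime_truncPath_mono [DecidableEq V] {t : ℕ} (p : Fin (t+1) → V) (v : V) :
    Monotone fun s => localTime (truncPath p s) v := fun s s' hs => by
  simp only [localTime_truncPath]
  exact sum_le_sum_of_subset (range_subset_range.mpr hs)

lemma localTime_truncPath_le_two_mul [DecidableEq V] {t : ℕ} (p : Fin (t+1) → V) (v : V)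
    (s : ℕ) : localTime (truncPath p s) v ≤ 2 * s := by
  rw [localTime_truncPath]
  calc _ ≤ ∑ _i ∈ range s, 2 := sum_le_sum fun i _ => by split_ifs <;> omega
    _ = 2 * s := by simp [mul_comm]

lemma lampAt_self {W : Type*} [DecidableEq V] {t : ℕ} (p : Fin (t+1) → V)
    (z : V → Fin (2*t+1) → W) (v : V) :
    lampAt p z t v = z v ⟨localTime (truncPath p t) v,
      Nat.lt_succ_of_le (localTime_truncPath_le_two_mul p v t)⟩ := by
  simp only [lampAt, min_eq_left (localTime_truncPath_le_two_mul p v t)]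

end LocalTime

section Lamplighter

variable {V W : Type*} [Fintype V] [DecidableEq V] [Fintype W] [DecidableEq W]
  {Q : Matrix W W ℝ} {π : W → ℝ} {r : List W → ℝ}

lemma sum_pi_ite_forall_prod {β : Type*} [Fintype β] (c : V → β → Prop)
    [∀ v, DecidablePred (c v)] (F : V → β → ℝ) :
    ∑ z : V → β, (if ∀ v, c v (z v) then ∏ v, F v (z v) else 0)
      = ∏ v, ∑ b, if c v b then F v b else 0 := by
  simp only [← Fintype.prod_ite_zero, Fintype.prod_sum]

theorem tauDmdLEProb_eq_mul_tauDmdLEBase (hQ : IsTransitionMatrix Q) (hπ : IsStationaryDist Q π)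
    (hr : IsSST Q π r) (P : Matrix V V ℝ) (f₀ : V → W) (x₀ : V) {t s : ℕ} (hs : s ≤ t)
    (f : V → W) (x : V) :
    tauDmdLEProb P Q r f₀ x₀ t s f x = (∏ v, π (f v)) * tauDmdLEBase P Q r f₀ x₀ t s x := by
  rw [tauDmdLEProb, tauDmdLEBase, mul_sum]
  refine sum_congr rfl fun p _ => ?_
  by_cases hx : p (Fin.last t) = x
  swap
  · simp [hx]
  have hL : ∀ v, localTime (truncPath p t) v < 2 * t + 1 := fun v =>
    Nat.lt_succ_of_le (localTime_truncPath_le_two_mul p v t)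
  set F : V → (Fin (2*t+1) → W) → ℝ := fun v ζ =>
    pathWeight Q (f₀ v) ζ * stopBy r (extendPath ζ) (localTime (truncPath p s) v)
  have hlamp : ∀ v, ∑ ζ, (if ζ ⟨localTime (truncPath p t) v, hL v⟩ = f v then F v ζ else 0)
      = π (f v) * ∑ ζ, F v ζ :=
    fun v => hr.sum_ite_pathWeight_stopBy hQ hπ (f₀ v) (f v)
      (localTime_truncPath_mono p v hs) (localTime_truncPath_le_two_mul p v t)
  calc _ = pathWeight P x₀ p * ∑ z : V → Fin (2*t+1) → W,
        (if ∀ v, z v ⟨localTime (truncPath p t) v, hL v⟩ = f v then ∏ v, F v (z v) else 0) := by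
        simp only [hx, true_and, lampAt_self, jointWeight, mul_sum, mul_ite, mul_zero,
          F, prod_mul_distrib, mul_assoc]
    _ = (∏ v, π (f v)) * (pathWeight P x₀ p * ∏ v, ∑ ζ, F v ζ) := by
        rw [sum_pi_ite_forall_prod fun v (ζ : Fin (2*t+1) → W) =>
            ζ ⟨localTime (truncPath p t) v, hL v⟩ = f v,
          prod_congr rfl fun v _ => hlamp v, prod_mul_distrib]
        ring
    _ = _ := by
        simp only [hx, if_true, jointWeight, Fintype.prod_sum, mul_sum, F, prod_mul_distrib,
          mul_assoc]

theorem tauDmdGTProbAt_eq_zero_of_isHaltingState (hQ : IsTransitionMatrix Q)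
    (hr : IsStoppingRule r) (P : Matrix V V ℝ) (f₀ : V → W) (x₀ : V) {h : W → W}
    (hh : ∀ w, IsHaltingState Q r w (h w)) (t : ℕ) (y : V) :
    tauDmdGTProbAt P Q r f₀ x₀ t (fun v => h (f₀ v)) y = 0 := by
  refine sum_eq_zero fun p _ => sum_eq_zero fun z _ => ?_
  split_ifs with hcond
  swap
  · rfl
  by_cases hw : jointWeight P Q f₀ x₀ p z = 0
  · rw [hw, zero_mul]
  have hpw : ∀ v, pathWeight Q (f₀ v) (z v) ≠ 0 := fun v h0 =>
    hw (by rw [jointWeight, prod_eq_zero (mem_univ v) h0, mul_zero])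
  have hstop : ∀ v ∈ univ, stopBy r (extendPath (z v)) (localTime p v) = 1 := fun v _ => by
    rw [show localTime p v = localTime (truncPath p t) v by rw [truncPath_self]]
    exact stopBy_eq_one_of_isHaltingState hQ hr (hh (f₀ v))
      (localTime_truncPath_le_two_mul p v t) (z v)
      ((lampAt_self p z v).symm.trans (hcond.2 v)) (hpw v)
  rw [prod_eq_one hstop, sub_self, mul_zero]

end Lamplighter

theorem tau_diamond_product_form_general {V W : Type*} [Fintype V] [DecidableEq V]
    [Fintype W] [DecidableEq W]
    (G : SimpleGraph V) (Q : Matrix W W ℝ) (πH : W → ℝ)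
    (hQ : IsTransitionMatrix Q) (hπH : IsStationaryDist Q πH)
    (r : List W → ℝ) (hr : IsSST Q πH r) (f₀ : V → W) (x₀ : V) :
    (∀ (t : ℕ) (f : V → W) (x : V),
        tauDmdEqProb (lazySRW G) Q r f₀ x₀ t f x
          = (∏ v, πH (f v)) * tauDmdEqBase (lazySRW G) Q r f₀ x₀ t x) ∧
      (∀ h : W → W, (∀ z : W, IsHaltingState Q r z (h z)) →
        ∀ (y : V) (t : ℕ),
          tauDmdGTProbAt (lazySRW G) Q r f₀ x₀ t (fun v => h (f₀ v)) y = 0) := by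
  refine ⟨fun t f x => ?_, fun h hh y t =>
    tauDmdGTProbAt_eq_zero_of_isHaltingState hQ hr.1 _ f₀ x₀ hh t y⟩
  have hLE := fun s (hs : s ≤ t) =>
    tauDmdLEProb_eq_mul_tauDmdLEBase hQ hπH hr (lazySRW G) f₀ x₀ hs f x
  rw [tauDmdEqProb, tauDmdEqBase, hLE t le_rfl]
  split_ifs
  · ring
  · rw [hLE (t - 1) (Nat.sub_le t 1), mul_sub]

/-- For any strong stationary time `τ_H` for the lamp chain (run as
conditionally independent copies on the lamp coordinates given the local times) and
`τ⋄ = inf{t : ∀ v, τ_H(v) ≤ L_v(t)}`: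
`P[X⋄_t = (f,x), τ⋄ = t] = (∏_v π_H(f_v)) P[X_t = x, τ⋄ = t]`; moreover if `τ_H` has a
halting state `h(z)` for every initial state `z`, then `((h(f₀(v)))_v, y)` is a halting
state for `τ⋄` and the initial state `(f₀,x₀)`, for every `y`. -/
theorem tau_diamond_product_form {V W : Type*} [Fintype V] [DecidableEq V] [Nonempty V]
    [Fintype W] [DecidableEq W] [Nonempty W]
    (G : SimpleGraph V) (Q : Matrix W W ℝ) (πH : W → ℝ)
    (hGconn : G.Connected) (hGreg : IsRegularGraph G)
    (hQ : IsTransitionMatrix Q) (hQirr : IsIrreducibleMC Q) (hQap : IsAperiodicMC Q)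
    (hπH : IsStationaryDist Q πH) (hQrev : IsReversibleMC Q πH)
    (r : List W → ℝ) (hr : IsSST Q πH r) (f₀ : V → W) (x₀ : V) :
    (∀ (t : ℕ) (f : V → W) (x : V),
        tauDmdEqProb (lazySRW G) Q r f₀ x₀ t f x
          = (∏ v, πH (f v)) * tauDmdEqBase (lazySRW G) Q r f₀ x₀ t x) ∧
      (∀ h : W → W, (∀ z : W, IsHaltingState Q r z (h z)) →
        ∀ (y : V) (t : ℕ),
          tauDmdGTProbAt (lazySRW G) Q r f₀ x₀ t (fun v => h (f₀ v)) y = 0) :=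
  tau_diamond_product_form_general G Q πH hQ hπH r hr f₀ x₀
end
end

section
/- For the lazy simple random walk on a finite connected regular graph G, for every t, conditionally on the event that the cover time satisfies τ_cov ≤ t/3, the probability that some vertex w∈G has local time L_w(t) ≤ t/(2|G|) is at most |G|·exp( −(log 2/48)·t/t_hit(G) ). Equivalently, P[ ∃w∈G : L_w(t) ≤ t/(2|G|) | τ_cov ≤ t/3 ] ≤ |G|·exp( −(log 2/48)·t/t_hit(G) ). -/
open Finset

noncomputable section

open scoped Classical

/-!
The time interval `[0, t]` is split at `s = ⌊t/3⌋`. Covering by time `t/3` only depends on the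
path up to time `s`, while a vertex `w` with `L_w(t) ≤ t/(2|G|)` is visited at most
`t/(4|G|) + 1` times during `[s, t]`; by the Markov property at time `s` and a union bound over
`w` it suffices to bound, uniformly in the starting point, the probability of so few visits in
`T ≥ 2t/3` steps.

That bound is a Chernoff estimate for the number of visits `N_T` to `w`. With
`h(z) = 1 + 2ρ E_z[τ_w]`, `ρ = 1/(4 t_hit)` and `θ = ρ(2|G| - 1)`, the process
`exp(ρ T - θ N_T) h(X_T)` is a supermartingale: off `w` this is the first-step recursion
`E_z[τ_w] = 1 + (P E[τ_w])(z)`, at `w` it is Kac's formula `1 + (P E[τ_w])(w) = |G|`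
(the uniform distribution is stationary since `G` is regular). Since `1 ≤ h ≤ 3/2`, this gives
`P_y[N_T ≤ μ] ≤ (3/2) exp(θ μ - ρ T)`, which is at most `exp(-(log 2/48) t/t_hit)` once
`t ≥ 48 t_hit`; for smaller `t` the claimed bound exceeds `1` and is trivial.
-/

section PathSums

variable {V : Type*} [DecidableEq V] {P : Matrix V V ℝ}

lemma pathWeight_nonneg_s14 (hP : ∀ a b, 0 ≤ P a b) (x : V) {t : ℕ} (p : Fin (t+1) → V) :
    0 ≤ pathWeight P x p :=
  mul_nonneg (by split_ifs <;> norm_num) (Finset.prod_nonneg fun _ _ => hP _ _)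

lemma pathWeight_cons (x a : V) {t : ℕ} (q : Fin (t+1) → V) :
    pathWeight P x (Fin.cons a q)
      = (if a = x then 1 else 0) * (P a (q 0) * pathWeight P (q 0) q) := by
  simp only [pathWeight, Fin.prod_univ_succ, Fin.cons_zero, Fin.castSucc_zero, Fin.cons_succ,
    ← Fin.succ_castSucc, if_true, one_mul]

lemma pathWeight_snoc_s14 (x a : V) {t : ℕ} (q : Fin (t+1) → V) :
    pathWeight P x (Fin.snoc q a) = pathWeight P x q * P (q (Fin.last t)) a := by
  simp only [pathWeight, Fin.prod_univ_castSucc, Fin.snoc_castSucc, Fin.succ_last, Fin.snoc_last,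
    ← Fin.castSucc_zero, Fin.succ_castSucc]
  ring

variable [Fintype V]

/-- `E_x[B(X_0, …, X_T)]`. -/
def pathExpect (P : Matrix V V ℝ) (x : V) (T : ℕ) (B : (Fin (T+1) → V) → ℝ) : ℝ :=
  ∑ p : Fin (T+1) → V, pathWeight P x p * B p

/-- `P_x[(X_0, …, X_T) ∈ E]`. -/
def pathProb (P : Matrix V V ℝ) (x : V) (T : ℕ) (E : (Fin (T+1) → V) → Prop)
    [DecidablePred E] : ℝ :=
  ∑ p : Fin (T+1) → V, if E p then pathWeight P x p else 0

lemma pathProb_eq_pathExpect (x : V) (T : ℕ) (E : (Fin (T+1) → V) → Prop) [DecidablePred E] :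
    pathProb P x T E = pathExpect P x T (fun p => if E p then 1 else 0) := by
  simp only [pathProb, pathExpect, mul_ite, mul_one, mul_zero]

lemma pathExpect_mono (hP : ∀ a b, 0 ≤ P a b) (x : V) (T : ℕ)
    {B B' : (Fin (T+1) → V) → ℝ} (h : ∀ r, B r ≤ B' r) :
    pathExpect P x T B ≤ pathExpect P x T B' :=
  Finset.sum_le_sum fun r _ => mul_le_mul_of_nonneg_left (h r) (pathWeight_nonneg_s14 hP x r)

lemma pathExpect_const_mul (x : V) (T : ℕ) (c : ℝ) (B : (Fin (T+1) → V) → ℝ) :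
    pathExpect P x T (fun r => c * B r) = c * pathExpect P x T B := by
  simp only [pathExpect, Finset.mul_sum]
  exact Finset.sum_congr rfl fun r _ => by ring

lemma pathProb_nonneg (hP : ∀ a b, 0 ≤ P a b) (x : V) (T : ℕ)
    (E : (Fin (T+1) → V) → Prop) [DecidablePred E] : 0 ≤ pathProb P x T E :=
  Finset.sum_nonneg fun p _ => by split_ifs <;> simp [pathWeight_nonneg_s14 hP x p]

lemma pathProb_mono (hP : ∀ a b, 0 ≤ P a b) (x : V) (T : ℕ)
    {E F : (Fin (T+1) → V) → Prop} [DecidablePred E] [DecidablePred F] (h : ∀ p, E p → F p) :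
    pathProb P x T E ≤ pathProb P x T F := by
  refine Finset.sum_le_sum fun p _ => ?_
  by_cases hE : E p
  · simp [hE, h p hE]
  · simp only [hE, if_false]; split_ifs <;> simp [pathWeight_nonneg_s14 hP x p]

lemma pathProb_congr (x : V) (T : ℕ) {E F : (Fin (T+1) → V) → Prop} [DecidablePred E]
    [DecidablePred F] (h : ∀ p, E p ↔ F p) : pathProb P x T E = pathProb P x T F :=
  Finset.sum_congr rfl fun p _ => if_congr (h p) rfl rfl

lemma pathExpect_zero (x : V) (B : (Fin 1 → V) → ℝ) : pathExpect P x 0 B = B (fun _ => x) := by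
  rw [pathExpect, ← (Equiv.funUnique (Fin 1) V).symm.sum_comp, Finset.sum_eq_single x]
  · simp [pathWeight]; rfl
  · intro b _ hb; simp [pathWeight, hb]
  · simp

lemma pathExpect_succ_snoc (x : V) (T : ℕ) (B : (Fin (T+2) → V) → ℝ) :
    pathExpect P x (T+1) B
      = pathExpect P x T (fun r => ∑ a : V, P (r (Fin.last T)) a * B (Fin.snoc r a)) := by
  rw [pathExpect, ← (Fin.snocEquiv fun _ => V).sum_comp, Fintype.sum_prod_type, Finset.sum_comm]
  refine Finset.sum_congr rfl fun q _ => ?_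
  rw [Finset.mul_sum]
  refine Finset.sum_congr rfl fun a _ => ?_
  rw [show (Fin.snocEquiv fun _ => V) (a, q) = Fin.snoc q a from rfl, pathWeight_snoc_s14]
  ring

lemma pathExpect_succ_cons (x : V) (T : ℕ) (B : (Fin (T+2) → V) → ℝ) :
    pathExpect P x (T+1) B = ∑ z : V, P x z * pathExpect P z T (fun r => B (Fin.cons x r)) := by
  rw [pathExpect, ← (Fin.consEquiv fun _ => V).sum_comp, Fintype.sum_prod_type,
    Finset.sum_eq_single x (fun a _ ha => by simp [Fin.consEquiv, pathWeight_cons, ha]) (by simp)]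
  simp only [pathExpect, Finset.mul_sum]
  rw [Finset.sum_comm]
  refine Finset.sum_congr rfl fun q _ => ?_
  rw [Finset.sum_eq_single (q 0) (fun z _ hz => by simp [pathWeight, Ne.symm hz]) (by simp)]
  simp only [Fin.consEquiv, Equiv.coe_fn_mk, pathWeight_cons, if_true, one_mul, mul_assoc]

lemma pathExpect_one (hP : IsTransitionMatrix P) (x : V) (T : ℕ) :
    pathExpect P x T (fun _ => 1) = 1 := by
  induction T generalizing x with
  | zero => rw [pathExpect_zero]
  | succ T ih => simp only [pathExpect_succ_snoc, mul_one, hP.2, ih]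

end PathSums

section MarkovProperty

variable {V : Type*}

def firstPart {s T : ℕ} (p : Fin (s+T+1) → V) : Fin (s+1) → V :=
  fun j => p (Fin.castLE (by omega) j)

def lastPart {s T : ℕ} (p : Fin (s+T+1) → V) : Fin (T+1) → V :=
  fun i => p ⟨s + i, by omega⟩

lemma firstPart_snoc {s T : ℕ} (p : Fin (s+T+1) → V) (a : V) :
    firstPart (T := T+1) (Fin.snoc p a) = firstPart p := by
  funext j
  exact Fin.snoc_castSucc (α := fun _ => V) (i := Fin.castLE (by omega) j) ..

lemma lastPart_snoc {s T : ℕ} (p : Fin (s+T+1) → V) (a : V) :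
    lastPart (T := T+1) (Fin.snoc p a) = Fin.snoc (lastPart p) a := by
  funext i
  by_cases hi : (i : ℕ) < T + 1 <;> simp [lastPart, Fin.snoc, hi]

lemma lastPart_last {s T : ℕ} (p : Fin (s+T+1) → V) :
    lastPart p (Fin.last T) = p (Fin.last (s+T)) := rfl

variable [Fintype V] [DecidableEq V] {P : Matrix V V ℝ}

theorem pathExpect_split (s T : ℕ) (x : V) (A : (Fin (s+1) → V) → ℝ) (B : (Fin (T+1) → V) → ℝ) :
    pathExpect P x (s+T) (fun p => A (firstPart p) * B (lastPart p))
      = pathExpect P x s (fun q => A q * pathExpect P (q (Fin.last s)) T B) := by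
  induction T with
  | zero =>
    simp only [pathExpect_zero]
    refine Finset.sum_congr rfl fun p _ => ?_
    have hlast : lastPart (T := 0) p = fun _ => p (Fin.last s) :=
      funext fun i => congrArg p (Fin.ext (by simp [Fin.fin_one_eq_zero i]))
    show pathWeight P x p * (A (firstPart (T := 0) p) * B (lastPart p)) = _
    rw [hlast]
    rfl
  | succ T ih =>
    change pathExpect P x (s + T + 1) _ = _
    rw [pathExpect_succ_snoc]
    have hsnoc : ∀ r : Fin (s+T+1) → V,
        ∑ a, P (r (Fin.last (s+T))) a *
            (A (firstPart (T := T+1) (Fin.snoc r a)) * B (lastPart (T := T+1) (Fin.snoc r a)))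
          = A (firstPart r) * ∑ a, P (lastPart r (Fin.last T)) a * B (Fin.snoc (lastPart r) a) := by
      intro r
      rw [Finset.mul_sum]
      refine Finset.sum_congr rfl fun a _ => ?_
      rw [firstPart_snoc, lastPart_snoc, lastPart_last]
      ring
    refine (congrArg (pathExpect P x (s+T)) (funext hsnoc)).trans
      ((ih fun r => ∑ a, P (r (Fin.last T)) a * B (Fin.snoc r a)).trans ?_)
    simp only [pathExpect_succ_snoc]

theorem pathProb_split (s T : ℕ) (x : V) (A : (Fin (s+1) → V) → Prop)
    [DecidablePred A] (B : (Fin (T+1) → V) → Prop) [DecidablePred B] :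
    pathProb P x (s+T) (fun p => A (firstPart p) ∧ B (lastPart p))
      = pathExpect P x s (fun q => if A q then pathProb P (q (Fin.last s)) T B else 0) := by
  have hind : ∀ p : Fin (s+T+1) → V, (if A (firstPart p) ∧ B (lastPart p) then (1:ℝ) else 0)
      = (if A (firstPart p) then 1 else 0) * (if B (lastPart p) then 1 else 0) :=
    fun p => by rw [ite_zero_mul_ite_zero, one_mul]
  rw [pathProb_eq_pathExpect, congrArg (pathExpect P x (s+T)) (funext hind)]
  refine (pathExpect_split s T x (fun q => if A q then 1 else 0)
    (fun r => if B r then 1 else 0)).trans ?_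
  exact congrArg _ (funext fun q => by split_ifs <;> simp [pathProb_eq_pathExpect])

end MarkovProperty

lemma summable_pow_div {q : ℝ} (hq0 : 0 ≤ q) (hq1 : q < 1) (L : ℕ) [NeZero L] :
    Summable fun n : ℕ => q ^ (n / L) := by
  rw [← (Nat.divModEquiv L).symm.summable_iff]
  have hcomp : (fun n : ℕ => q ^ (n / L)) ∘ (Nat.divModEquiv L).symm
      = fun p : ℕ × Fin L => q ^ p.1 * 1 := by
    funext ⟨k, i⟩
    simp [Nat.add_mul_div_right _ _ (NeZero.pos L), Nat.div_eq_of_lt i.is_lt, add_comm]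
  rw [hcomp]
  exact (summable_geometric_of_lt_one hq0 hq1).mul_of_nonneg Summable.of_finite
    (fun _ => pow_nonneg hq0 _) fun _ => zero_le_one

section Hitting

variable {V : Type*} [Fintype V] [DecidableEq V] {P : Matrix V V ℝ}

lemma hitGT_eq_pathProb (x w : V) (T : ℕ) :
    hitGT P x w T = pathProb P x T (fun p => ∀ i, p i ≠ w) := rfl

lemma hitGT_nonneg (hP : ∀ a b, 0 ≤ P a b) (x w : V) (T : ℕ) : 0 ≤ hitGT P x w T :=
  pathProb_nonneg hP x T _

lemma hitGT_zero (x w : V) : hitGT P x w 0 = if x = w then 0 else 1 := by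
  rw [hitGT_eq_pathProb, pathProb_eq_pathExpect, pathExpect_zero]
  simp

lemma hitGT_succ (x w : V) (T : ℕ) :
    hitGT P x w (T+1) = if x = w then 0 else ∑ z, P x z * hitGT P z w T := by
  simp only [hitGT_eq_pathProb, pathProb_eq_pathExpect, pathExpect_succ_cons, Fin.forall_fin_succ,
    Fin.cons_zero, Fin.cons_succ]
  split_ifs with h <;> simp [h, pathExpect]

lemma hitGT_self (w : V) (T : ℕ) : hitGT P w w T = 0 := by
  cases T <;> simp [hitGT_zero, hitGT_succ]

lemma hitGT_succ_le (hP : IsTransitionMatrix P) (x w : V) (T : ℕ) :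
    hitGT P x w (T+1) ≤ hitGT P x w T := by
  induction T generalizing x with
  | zero =>
    rw [hitGT_succ, hitGT_zero]
    split_ifs
    · rfl
    · calc ∑ z, P x z * hitGT P z w 0 ≤ ∑ z, P x z := Finset.sum_le_sum fun z _ =>
            mul_le_of_le_one_right (hP.1 x z) (by rw [hitGT_zero]; split_ifs <;> norm_num)
        _ = 1 := hP.2 x
  | succ T ih =>
    rw [hitGT_succ, hitGT_succ x]
    split_ifs
    · rfl
    · exact Finset.sum_le_sum fun z _ => mul_le_mul_of_nonneg_left (ih z) (hP.1 x z)

lemma hitGT_antitone (hP : IsTransitionMatrix P) (x w : V) : Antitone fun T => hitGT P x w T :=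
  antitone_nat_of_succ_le (hitGT_succ_le hP x w)

lemma hitGT_add_le (hP : ∀ a b, 0 ≤ P a b) {w : V} {T : ℕ} {c : ℝ}
    (hc : ∀ y, hitGT P y w T ≤ c) (x : V) (s : ℕ) :
    hitGT P x w (s + T) ≤ hitGT P x w s * c := by
  induction s generalizing x with
  | zero =>
    rw [zero_add, hitGT_zero]
    split_ifs with h
    · simp [h, hitGT_self]
    · simpa using hc x
  | succ s ih =>
    rw [Nat.add_right_comm, hitGT_succ, hitGT_succ]
    split_ifs
    · simp
    · rw [Finset.sum_mul]
      exact Finset.sum_le_sum fun z _ => by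
        rw [mul_assoc]; exact mul_le_mul_of_nonneg_left (ih z) (hP x z)

lemma hitGT_mul_le_pow (hP : ∀ a b, 0 ≤ P a b) {w : V} {L : ℕ} {q : ℝ}
    (hq : ∀ y, hitGT P y w L ≤ q) (k : ℕ) (x : V) : hitGT P x w (L * k) ≤ q ^ k := by
  have hq0 : 0 ≤ q := (hitGT_nonneg hP x w L).trans (hq x)
  induction k with
  | zero => rw [mul_zero, hitGT_zero]; split_ifs <;> norm_num
  | succ k ih =>
    calc hitGT P x w (L * k + L) ≤ hitGT P x w (L * k) * q := hitGT_add_le hP hq x (L * k)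
      _ ≤ q ^ k * q := mul_le_mul_of_nonneg_right ih hq0
      _ = q ^ (k + 1) := (pow_succ q k).symm

lemma summable_hitGT (hP : IsTransitionMatrix P) {w : V} {L : ℕ} {q : ℝ} (hL : 0 < L)
    (hq1 : q < 1) (hq : ∀ y, hitGT P y w L ≤ q) (x : V) :
    Summable fun T => hitGT P x w T := by
  have : NeZero L := ⟨hL.ne'⟩
  have hq0 : 0 ≤ q := (hitGT_nonneg hP.1 x w L).trans (hq x)
  refine (summable_pow_div hq0 hq1 L).of_nonneg_of_le (hitGT_nonneg hP.1 x w) fun T => ?_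
  calc hitGT P x w T ≤ hitGT P x w (L * (T / L)) := hitGT_antitone hP x w (Nat.mul_div_le T L)
    _ ≤ q ^ (T / L) := hitGT_mul_le_pow hP.1 hq _ x

lemma hitGT_le_one_sub_pathWeight (hP : IsTransitionMatrix P) {x w : V} {T : ℕ}
    (p : Fin (T+1) → V) (hp : ∃ i, p i = w) : hitGT P x w T ≤ 1 - pathWeight P x p := by
  have hp' : ¬ ∀ i, p i ≠ w := fun h => hp.elim fun i hi => h i hi
  have htot : ∑ r : Fin (T+1) → V, pathWeight P x r = 1 := by
    simpa [pathExpect] using pathExpect_one hP x T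
  rw [hitGT, ← Finset.sum_erase _ (a := p) (by simp [hp']), ← htot,
    ← Finset.add_sum_erase _ _ (Finset.mem_univ p), add_sub_cancel_left]
  exact Finset.sum_le_sum fun r _ => by split_ifs <;> simp [pathWeight_nonneg_s14 hP.1]

end Hitting

section ExpectedHittingTime

variable {V : Type*} [Fintype V] [DecidableEq V] {P : Matrix V V ℝ}

lemma expHit_self (w : V) : expHit P w w = 0 := by
  simp [expHit, hitGT_self]

lemma expHit_nonneg (hP : ∀ a b, 0 ≤ P a b) (x w : V) : 0 ≤ expHit P x w :=
  tsum_nonneg fun T => hitGT_nonneg hP x w T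

lemma expHit_le_maxHitTime (x y : V) : expHit P x y ≤ maxHitTime P :=
  (le_ciSup (Set.finite_range _).bddAbove y).trans
    (le_ciSup (f := fun x => ⨆ y, expHit P x y) (Set.finite_range _).bddAbove x)

lemma maxHitTime_eq_zero [Subsingleton V] : maxHitTime P = 0 := by
  have h : ∀ x y : V, expHit P x y = 0 := fun x y => by rw [Subsingleton.elim y x, expHit_self]
  simp [maxHitTime, h]

lemma expHit_eq_one_add {w : V} (hsum : ∀ z, Summable fun T => hitGT P z w T) {x : V}
    (hxw : x ≠ w) : expHit P x w = 1 + ∑ z, P x z * expHit P z w := by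
  rw [expHit, (hsum x).tsum_eq_zero_add, hitGT_zero, if_neg hxw]
  simp only [hitGT_succ, if_neg hxw]
  rw [Summable.tsum_finsetSum fun z _ => (hsum z).mul_left _]
  simp only [expHit, tsum_mul_left]

theorem one_add_sum_mul_expHit_eq_inv {π : V → ℝ} (hπ : IsStationaryDist P π) {w : V}
    (hsum : ∀ z, Summable fun T => hitGT P z w T) :
    1 + ∑ z, P w z * expHit P z w = (π w)⁻¹ := by
  set g : V → ℝ := fun z => expHit P z w
  have hstat : ∑ x, π x * ∑ z, P x z * g z = ∑ z, π z * g z := by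
    simp only [Finset.mul_sum, ← mul_assoc]
    rw [Finset.sum_comm]
    simp only [← Finset.sum_mul, hπ.2.2]
  have hrec : ∀ x, π x * g x = π x * (1 + ∑ z, P x z * g z)
      - if x = w then π w * (1 + ∑ z, P w z * g z) else 0 := by
    intro x
    split_ifs with h
    · simp [h, g, expHit_self]
    · rw [sub_zero]
      exact congrArg (π x * ·) (expHit_eq_one_add hsum h)
  have hsum_rec := Finset.sum_congr rfl fun x (_ : x ∈ Finset.univ) => hrec x
  simp only [Finset.sum_sub_distrib, Finset.sum_ite_eq', Finset.mem_univ, if_true, mul_add,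
    mul_one, Finset.sum_add_distrib, hπ.2.1, hstat] at hsum_rec
  have hmul : π w * (1 + ∑ z, P w z * g z) = 1 := by rw [mul_add, mul_one]; linarith
  exact eq_inv_of_mul_eq_one_right hmul

theorem two_mul_inv_sub_one_le_maxHitTime (hP : IsTransitionMatrix P) (hlazy : IsLazyMC P)
    {π : V → ℝ} (hπ : IsStationaryDist P π) {w : V}
    (hsum : ∀ z, Summable fun T => hitGT P z w T) :
    2 * ((π w)⁻¹ - 1) ≤ maxHitTime P := by
  have hkac := one_add_sum_mul_expHit_eq_inv hπ hsum
  have hoff : ∑ z ∈ Finset.univ.erase w, P w z = 1 - P w w := by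
    rw [← hP.2 w, ← Finset.add_sum_erase _ _ (Finset.mem_univ w), add_sub_cancel_left]
  have hle : ∑ z, P w z * expHit P z w ≤ (1 - P w w) * maxHitTime P := by
    rw [← Finset.sum_erase _ (by rw [expHit_self, mul_zero]), ← hoff, Finset.sum_mul]
    exact Finset.sum_le_sum fun z _ =>
      mul_le_mul_of_nonneg_left (expHit_le_maxHitTime z w) (hP.1 w z)
  have : 0 ≤ maxHitTime P := (expHit_self (P := P) w).symm.le.trans (expHit_le_maxHitTime w w)
  nlinarith [hlazy w]

end ExpectedHittingTime

section Visits

variable {V : Type*} [DecidableEq V]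

/-- The number of visits to `w` at times `0, …, T - 1`; the final time `T` is not counted. -/
def numVisits (w : V) {T : ℕ} (r : Fin (T+1) → V) : ℕ :=
  ∑ i : Fin T, if r i.castSucc = w then 1 else 0

lemma numVisits_cons (w y : V) {T : ℕ} (r : Fin (T+1) → V) :
    numVisits w (Fin.cons y r) = (if y = w then 1 else 0) + numVisits w r := by
  simp only [numVisits, Fin.sum_univ_succ, Fin.castSucc_zero, Fin.cons_zero, ← Fin.succ_castSucc,
    Fin.cons_succ]

variable [Fintype V] {P : Matrix V V ℝ}

lemma pathExpect_exp_numVisits_succ (θ : ℝ) (w y : V) (T : ℕ) :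
    pathExpect P y (T+1) (fun r => Real.exp (-θ * numVisits w r))
      = (if y = w then Real.exp (-θ) else 1)
          * ∑ z, P y z * pathExpect P z T (fun r => Real.exp (-θ * numVisits w r)) := by
  have hcons : ∀ r : Fin (T+1) → V, Real.exp (-θ * numVisits w (Fin.cons y r))
      = (if y = w then Real.exp (-θ) else 1) * Real.exp (-θ * numVisits w r) := by
    intro r
    rw [numVisits_cons]
    split_ifs <;> simp [mul_add, Real.exp_add]
  simp only [pathExpect_succ_cons, hcons, pathExpect_const_mul, Finset.mul_sum]
  exact Finset.sum_congr rfl fun z _ => by ring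

lemma pathProb_numVisits_le_le_exp_mul (hP : ∀ a b, 0 ≤ P a b) {θ : ℝ} (hθ : 0 ≤ θ)
    (w y : V) (T : ℕ) (μ : ℝ) :
    pathProb P y T (fun r => (numVisits w r : ℝ) ≤ μ)
      ≤ Real.exp (θ * μ) * pathExpect P y T (fun r => Real.exp (-θ * numVisits w r)) := by
  rw [pathProb_eq_pathExpect, ← pathExpect_const_mul]
  refine pathExpect_mono hP y T fun r => ?_
  split_ifs with h
  · rw [← Real.exp_add]
    exact Real.one_le_exp (by nlinarith)
  · positivity

variable {π : V → ℝ} {w : V} {ρ : ℝ}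

lemma lyapunov_drift (hP : IsTransitionMatrix P) (hπ : IsStationaryDist P π)
    (hsum : ∀ z, Summable fun T => hitGT P z w T) (hρ0 : 0 ≤ ρ) (hρ : 2 * ρ * maxHitTime P ≤ 1)
    (y : V) :
    (if y = w then Real.exp (-(ρ * (2 * (π w)⁻¹ - 1))) else 1)
        * ∑ z, P y z * (1 + 2 * ρ * expHit P z w)
      ≤ Real.exp (-ρ) * (1 + 2 * ρ * expHit P y w) := by
  have hmean : ∑ z, P y z * (1 + 2 * ρ * expHit P z w)
      = 1 + 2 * ρ * ∑ z, P y z * expHit P z w := by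
    simp only [mul_add, mul_one, Finset.sum_add_distrib, hP.2 y, Finset.mul_sum]
    exact congrArg _ (Finset.sum_congr rfl fun z _ => by ring)
  rw [hmean]
  split_ifs with hy
  · subst hy
    have hkac := one_add_sum_mul_expHit_eq_inv hπ hsum
    set u := 2 * ρ * ∑ z, P y z * expHit P z y
    have hθ : -(ρ * (2 * (π y)⁻¹ - 1)) = -ρ + -u := by rw [← hkac]; ring
    rw [hθ, Real.exp_add, expHit_self, mul_zero, add_zero, mul_one, mul_assoc]
    refine mul_le_of_le_one_right (Real.exp_pos _).le ?_
    rw [Real.exp_neg, inv_mul_le_iff₀ (Real.exp_pos _), mul_one, add_comm]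
    exact Real.add_one_le_exp u
  · have hrec : ∑ z, P y z * expHit P z w = expHit P y w - 1 := by
      rw [expHit_eq_one_add hsum hy]; ring
    have hg0 := expHit_nonneg hP.1 y w
    have hg : 2 * ρ * expHit P y w ≤ 1 :=
      (mul_le_mul_of_nonneg_left (expHit_le_maxHitTime y w) (by positivity)).trans hρ
    rw [one_mul, hrec]
    calc 1 + 2 * ρ * (expHit P y w - 1) ≤ (1 - ρ) * (1 + 2 * ρ * expHit P y w) := by
          nlinarith [mul_le_mul_of_nonneg_left hg hρ0]
      _ ≤ Real.exp (-ρ) * (1 + 2 * ρ * expHit P y w) :=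
          mul_le_mul_of_nonneg_right (by linarith [Real.add_one_le_exp (-ρ)]) (by positivity)

theorem pathExpect_exp_numVisits_le (hP : IsTransitionMatrix P) (hπ : IsStationaryDist P π)
    (hsum : ∀ z, Summable fun T => hitGT P z w T) (hρ0 : 0 ≤ ρ) (hρ : 2 * ρ * maxHitTime P ≤ 1)
    (T : ℕ) (y : V) :
    pathExpect P y T (fun r => Real.exp (-(ρ * (2 * (π w)⁻¹ - 1)) * numVisits w r))
      ≤ Real.exp (-(ρ * T)) * (1 + 2 * ρ * expHit P y w) := by
  induction T generalizing y with
  | zero =>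
    have := expHit_nonneg hP.1 y w
    simp only [pathExpect_zero, numVisits, Finset.univ_eq_empty, Finset.sum_empty]
    simp only [CharP.cast_eq_zero, mul_zero, neg_zero, Real.exp_zero, one_mul]
    nlinarith
  | succ T ih =>
    rw [pathExpect_exp_numVisits_succ]
    calc _ ≤ (if y = w then Real.exp (-(ρ * (2 * (π w)⁻¹ - 1))) else 1)
            * ∑ z, P y z * (Real.exp (-(ρ * T)) * (1 + 2 * ρ * expHit P z w)) := by
          refine mul_le_mul_of_nonneg_left (Finset.sum_le_sum fun z _ =>
            mul_le_mul_of_nonneg_left (ih z) (hP.1 y z)) (by split_ifs <;> positivity)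
      _ = Real.exp (-(ρ * T)) * ((if y = w then Real.exp (-(ρ * (2 * (π w)⁻¹ - 1))) else 1)
            * ∑ z, P y z * (1 + 2 * ρ * expHit P z w)) := by
          simp only [Finset.mul_sum]
          exact Finset.sum_congr rfl fun z _ => by ring
      _ ≤ Real.exp (-(ρ * T)) * (Real.exp (-ρ) * (1 + 2 * ρ * expHit P y w)) :=
          mul_le_mul_of_nonneg_left (lyapunov_drift hP hπ hsum hρ0 hρ y) (Real.exp_pos _).le
      _ = _ := by
          rw [← mul_assoc, ← Real.exp_add]
          push_cast
          ring_nf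

end Visits

section LazyRandomWalk

variable {V : Type*} [Fintype V] [DecidableEq V] (G : SimpleGraph V)

lemma lazySRW_nonneg (a b : V) : 0 ≤ lazySRW G a b := by
  unfold lazySRW; split_ifs <;> positivity

lemma lazySRW_self (x : V) : lazySRW G x x = 1 / 2 := if_pos rfl

lemma lazySRW_of_adj {a b : V} (h : G.Adj a b) : lazySRW G a b = 1 / (2 * graphDeg G a) := by
  rw [lazySRW, if_neg h.ne, if_pos h]

lemma isLazyMC_lazySRW : IsLazyMC (lazySRW G) := fun x => (lazySRW_self G x).ge

variable {G}

lemma isTransitionMatrix_lazySRW [Nontrivial V] (hconn : G.Connected) :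
    IsTransitionMatrix (lazySRW G) := by
  refine ⟨lazySRW_nonneg G, fun x => ?_⟩
  obtain ⟨y, hy⟩ := hconn.preconnected.exists_adj_of_nontrivial x
  have hd : (0 : ℝ) < graphDeg G x := by
    exact_mod_cast Finset.card_pos.mpr ⟨y, by simp [hy]⟩
  have hsplit : ∀ y, lazySRW G x y
      = (if x = y then 1 / 2 else 0) + if G.Adj x y then 1 / (2 * (graphDeg G x : ℝ)) else 0 := by
    intro y
    by_cases h : x = y
    · subst h; simp [lazySRW]
    · simp [lazySRW, h]
  rw [Finset.sum_congr rfl fun y _ => hsplit y, Finset.sum_add_distrib, Finset.sum_ite_eq,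
    ← Finset.sum_filter, Finset.sum_const]
  simp only [Finset.mem_univ, if_true, nsmul_eq_mul]
  rw [show ((univ.filter fun y => G.Adj x y).card : ℝ) = graphDeg G x from rfl]
  field_simp
  ring

lemma lazySRW_comm (hreg : IsRegularGraph G) (a b : V) : lazySRW G a b = lazySRW G b a := by
  obtain ⟨d, hd⟩ := hreg
  simp only [lazySRW, hd, eq_comm (a := a), G.adj_comm a b]

lemma isStationaryDist_lazySRW [Nontrivial V] (hconn : G.Connected) (hreg : IsRegularGraph G) :
    IsStationaryDist (lazySRW G) (unifDist V) := by
  have hn : (0 : ℝ) < Fintype.card V := by exact_mod_cast Fintype.card_pos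
  refine ⟨fun _ => inv_pos.mpr hn, ?_, fun y => ?_⟩
  · simp [unifDist, Finset.card_univ, hn.ne']
  · simp only [unifDist]
    rw [← Finset.mul_sum, Finset.sum_congr rfl fun x _ => lazySRW_comm hreg x y,
      (isTransitionMatrix_lazySRW hconn).2 y, mul_one]

lemma inv_two_mul_card_le_lazySRW {a b : V} (hab : a = b ∨ G.Adj a b) :
    (2 * Fintype.card V : ℝ)⁻¹ ≤ lazySRW G a b := by
  have : Nonempty V := ⟨a⟩
  have hn : (1 : ℝ) ≤ Fintype.card V := by exact_mod_cast Fintype.card_pos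
  rcases hab with rfl | h
  · rw [lazySRW_self, one_div]
    exact inv_anti₀ two_pos (by linarith)
  · have hd : 0 < graphDeg G a := Finset.card_pos.mpr ⟨b, by simp [h]⟩
    have hdn : (graphDeg G a : ℝ) ≤ Fintype.card V := by
      exact_mod_cast Finset.card_le_univ _
    rw [lazySRW_of_adj G h, one_div]
    exact inv_anti₀ (by positivity) (by linarith)

lemma exists_path_visit_lazySRW (hconn : G.Connected) (x w : V) :
    ∃ p : Fin (Fintype.card V - 1 + 1) → V, (∃ i, p i = w) ∧
      (2 * Fintype.card V : ℝ)⁻¹ ^ (Fintype.card V - 1) ≤ pathWeight (lazySRW G) x p := by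
  let W := (hconn.preconnected x w).some.toPath
  have hlen : W.1.length < Fintype.card V := W.2.length_lt
  have hstep : ∀ i : ℕ, W.1.getVert i = W.1.getVert (i + 1) ∨
      G.Adj (W.1.getVert i) (W.1.getVert (i + 1)) := by
    intro i
    by_cases hi : i < W.1.length
    · exact Or.inr (W.1.adj_getVert_succ hi)
    · left
      rw [W.1.getVert_of_length_le (by omega), W.1.getVert_of_length_le (by omega)]
  refine ⟨fun i => W.1.getVert i, ⟨⟨W.1.length, by omega⟩, W.1.getVert_length⟩, ?_⟩
  rw [pathWeight, if_pos (by simp), one_mul]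
  calc _ = ∏ _i : Fin (Fintype.card V - 1), (2 * Fintype.card V : ℝ)⁻¹ := by simp
    _ ≤ _ := Finset.prod_le_prod (fun _ _ => by positivity)
        fun i _ => inv_two_mul_card_le_lazySRW (hstep i)

lemma summable_hitGT_lazySRW [Nontrivial V] (hconn : G.Connected) (x w : V) :
    Summable fun T => hitGT (lazySRW G) x w T := by
  have hn : 1 < Fintype.card V := Fintype.one_lt_card
  have hδ : 0 < (2 * Fintype.card V : ℝ)⁻¹ ^ (Fintype.card V - 1) := by positivity
  refine summable_hitGT (isTransitionMatrix_lazySRW hconn) (by omega : 0 < Fintype.card V - 1)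
    (sub_lt_self 1 hδ) (fun y => ?_) x
  obtain ⟨p, hp, hwt⟩ := exists_path_visit_lazySRW hconn y w
  exact (hitGT_le_one_sub_pathWeight (isTransitionMatrix_lazySRW hconn) p hp).trans
    (by linarith)

lemma two_mul_card_sub_one_le_maxHitTime [Nontrivial V] (hconn : G.Connected)
    (hreg : IsRegularGraph G) : 2 * ((Fintype.card V : ℝ) - 1) ≤ maxHitTime (lazySRW G) := by
  simpa [unifDist] using two_mul_inv_sub_one_le_maxHitTime (isTransitionMatrix_lazySRW hconn)
    (isLazyMC_lazySRW G) (isStationaryDist_lazySRW hconn hreg) (w := Classical.arbitrary V)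
    fun z => summable_hitGT_lazySRW hconn z _

end LazyRandomWalk

section LocalTime

variable {V : Type*} [DecidableEq V]

lemma two_mul_card_visits_le_localTime_add_two {t : ℕ} (p : Fin (t+1) → V) (w : V) :
    2 * (univ.filter fun i => p i = w).card ≤ localTime p w + 2 := by
  have h0 : p 0 = w → 1 ≤ (univ.filter fun i => p i = w).card :=
    fun h => Finset.card_pos.mpr ⟨0, by simp [h]⟩
  unfold localTime
  split_ifs at h0 ⊢ <;> omega

lemma numVisits_lastPart_le {s T : ℕ} (p : Fin (s+T+1) → V) (w : V) :
    numVisits w (lastPart p) ≤ (univ.filter fun i => p i = w).card := by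
  rw [numVisits, ← Finset.card_filter]
  refine Finset.card_le_card_of_injOn (fun i : Fin T => (⟨s + i, by omega⟩ : Fin (s+T+1)))
    (fun i hi => by simpa [lastPart] using (Finset.mem_filter.mp hi).2) fun i _ j _ hij => ?_
  simpa [Fin.ext_iff] using hij

lemma numVisits_lastPart_le_of_localTime_le {s T : ℕ} (p : Fin (s+T+1) → V) (w : V) {μ : ℝ}
    (h : (localTime p w : ℝ) ≤ 2 * μ) : (numVisits w (lastPart p) : ℝ) ≤ μ + 1 := by
  have h1 := two_mul_card_visits_le_localTime_add_two p w
  have h2 := numVisits_lastPart_le p w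
  have h3 : (2 * numVisits w (lastPart p) : ℝ) ≤ localTime p w + 2 := by
    exact_mod_cast (by omega : 2 * numVisits w (lastPart p) ≤ localTime p w + 2)
  linarith

omit [DecidableEq V] in
lemma coveredByThird_iff_surjective_firstPart {s T : ℕ} (hs : 3 * s ≤ s + T)
    (hsT : s + T < 3 * (s + 1)) (p : Fin (s+T+1) → V) :
    coveredByThird p ↔ Function.Surjective (firstPart p) := by
  have key : ∀ i : ℕ, (i : ℝ) ≤ ((s + T : ℕ) : ℝ) / 3 ↔ i ≤ s := by
    intro i
    rw [le_div_iff₀ (by norm_num : (0:ℝ) < 3)]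
    norm_cast
    omega
  simp only [coveredByThird, key]
  constructor
  · intro h v
    obtain ⟨i, hi, hv⟩ := h v
    exact ⟨⟨i, by omega⟩, hv⟩
  · intro h v
    obtain ⟨j, hj⟩ := h v
    exact ⟨Fin.castLE (by omega) j, by simp; omega, hj⟩

end LocalTime

section Conditioning

variable {V : Type*} [Fintype V] [DecidableEq V] {P : Matrix V V ℝ}

lemma pathProb_exists_le_sum (hP : ∀ a b, 0 ≤ P a b) (x : V) (T : ℕ) {ι : Type*} [Fintype ι]
    (E : ι → (Fin (T+1) → V) → Prop) [∀ i, DecidablePred (E i)] :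
    pathProb P x T (fun p => ∃ i, E i p) ≤ ∑ i, pathProb P x T (E i) := by
  unfold pathProb
  rw [Finset.sum_comm]
  refine Finset.sum_le_sum fun p _ => ?_
  have hterm : ∀ i ∈ univ, 0 ≤ if E i p then pathWeight P x p else 0 :=
    fun i _ => by split_ifs <;> simp [pathWeight_nonneg_s14 hP]
  split_ifs with h
  · obtain ⟨i, hi⟩ := h
    exact (if_pos hi).symm.le.trans (Finset.single_le_sum hterm (Finset.mem_univ i))
  · exact Finset.sum_nonneg hterm

lemma pathProb_firstPart (hP : IsTransitionMatrix P) (s T : ℕ) (x : V)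
    (A : (Fin (s+1) → V) → Prop) [DecidablePred A] :
    pathProb P x (s+T) (fun p => A (firstPart p)) = pathProb P x s A := by
  have hsplit := pathProb_split (P := P) s T x A (fun _ => True)
  simp only [and_true] at hsplit
  rw [hsplit, pathProb_eq_pathExpect]
  exact congrArg _ (funext fun q => by
    split_ifs <;> simp [pathProb_eq_pathExpect, pathExpect_one hP])

theorem pathProb_first_and_exists_last_le (hP : ∀ a b, 0 ≤ P a b) {s T : ℕ} (x : V)
    (A : (Fin (s+1) → V) → Prop) [DecidablePred A] {ι : Type*} [Fintype ι]
    (B : ι → (Fin (T+1) → V) → Prop) [∀ i, DecidablePred (B i)] {ε : ℝ}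
    (hB : ∀ i y, pathProb P y T (B i) ≤ ε) :
    pathProb P x (s+T) (fun p => A (firstPart p) ∧ ∃ i, B i (lastPart p))
      ≤ Fintype.card ι * ε * pathProb P x s A := by
  calc _ ≤ pathProb P x (s+T) (fun p => ∃ i, A (firstPart p) ∧ B i (lastPart p)) :=
        pathProb_mono hP x _ fun p ⟨ha, i, hb⟩ => ⟨i, ha, hb⟩
    _ ≤ ∑ i, pathProb P x (s+T) (fun p => A (firstPart p) ∧ B i (lastPart p)) :=
        pathProb_exists_le_sum hP x _ _
    _ ≤ ∑ _i : ι, ε * pathProb P x s A := Finset.sum_le_sum fun i _ => by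
        rw [pathProb_split, pathProb_eq_pathExpect, ← pathExpect_const_mul]
        exact pathExpect_mono hP x s fun q => by split_ifs <;> simp [hB]
    _ = _ := by simp [mul_assoc]

end Conditioning

lemma few_visits_exponent_le {n h t T : ℝ} (hn : 2 ≤ n) (hh : 2 * (n - 1) ≤ h)
    (ht : 48 * h ≤ t) (hT : 2 * t ≤ 3 * T) :
    Real.exp ((4 * h)⁻¹ * (2 * n - 1) * (t / (4 * n) + 1)) * Real.exp (-((4 * h)⁻¹ * T)) * (3 / 2)
      ≤ Real.exp (-(Real.log 2 / 48) * (t / h)) := by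
  have hh0 : 0 < h := by linarith
  have hn0 : 0 < n := by linarith
  have hvisit : (2 * n - 1) * (t / (4 * n)) ≤ t / 2 := by
    have : (2 * n - 1) * (t / (4 * n)) = t / 2 - t / (4 * n) := by field_simp; ring
    rw [this]
    linarith [div_nonneg (by linarith : (0:ℝ) ≤ t) (by linarith : (0:ℝ) ≤ 4 * n)]
  have hexp : (4 * h)⁻¹ * (2 * n - 1) * (t / (4 * n) + 1) + -((4 * h)⁻¹ * T)
      ≤ -(t / h) / 24 + 3 / 8 := by
    have e : (4 * h)⁻¹ * (2 * n - 1) * (t / (4 * n) + 1) + -((4 * h)⁻¹ * T)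
        = ((2 * n - 1) * (t / (4 * n)) + (2 * n - 1) - T) / (4 * h) := by field_simp; ring
    have e' : -(t / h) / 24 + 3 / 8 = (-t / 6 + 3 / 2 * h) / (4 * h) := by field_simp; ring
    rw [e, e']
    exact div_le_div_of_nonneg_right (by linarith) (by positivity)
  have hx : 48 ≤ t / h := (le_div_iff₀ hh0).mpr ht
  have hlog : Real.log 2 * (t / h) ≤ 1 * (t / h) :=
    mul_le_mul_of_nonneg_right (by linarith [Real.log_two_lt_d9]) (by linarith)
  calc _ ≤ Real.exp ((4 * h)⁻¹ * (2 * n - 1) * (t / (4 * n) + 1)) * Real.exp (-((4 * h)⁻¹ * T))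
          * Real.exp (1 / 2) := by
        gcongr
        linarith [Real.add_one_le_exp (1 / 2 : ℝ)]
    _ ≤ _ := by
        rw [← Real.exp_add, ← Real.exp_add]
        exact Real.exp_le_exp.mpr (by linarith)

section Main

variable {V : Type*} [Fintype V] [DecidableEq V] {G : SimpleGraph V}

lemma nontrivial_of_card_mul_exp_lt_one [Nonempty V] {P : Matrix V V ℝ} {c t : ℝ}
    (h : Fintype.card V * Real.exp (c * (t / maxHitTime P)) < 1) : Nontrivial V := by
  by_contra hV
  rw [not_nontrivial_iff_subsingleton] at hV
  have hcard : Fintype.card V = 1 :=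
    le_antisymm (Fintype.card_le_one_iff_subsingleton.mpr hV) Fintype.card_pos
  simp [maxHitTime_eq_zero, hcard] at h

lemma forty_eight_mul_maxHitTime_le [Nontrivial V] (hconn : G.Connected)
    (hreg : IsRegularGraph G) {t : ℝ}
    (h : Fintype.card V * Real.exp (-(Real.log 2 / 48) * (t / maxHitTime (lazySRW G))) < 1) :
    48 * maxHitTime (lazySRW G) ≤ t := by
  have hn : (2 : ℝ) ≤ Fintype.card V := by exact_mod_cast Fintype.one_lt_card
  have hh0 : 0 < maxHitTime (lazySRW G) := by
    linarith [two_mul_card_sub_one_le_maxHitTime hconn hreg]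
  by_contra hc
  have hx : t / maxHitTime (lazySRW G) < 48 := (div_lt_iff₀ hh0).mpr (by linarith)
  have hhalf : 1 / 2 < Real.exp (-(Real.log 2 / 48) * (t / maxHitTime (lazySRW G))) := by
    rw [show (1 / 2 : ℝ) = Real.exp (-Real.log 2) by
      rw [Real.exp_neg, Real.exp_log two_pos]; norm_num]
    exact Real.exp_lt_exp.mpr (by nlinarith [Real.log_pos one_lt_two])
  nlinarith

theorem pathProb_numVisits_le_lazySRW [Nontrivial V] (hconn : G.Connected)
    (hreg : IsRegularGraph G) {t T : ℕ} (ht : 48 * maxHitTime (lazySRW G) ≤ t)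
    (hT : 2 * t ≤ 3 * T) (w y : V) :
    pathProb (lazySRW G) y T (fun r => (numVisits w r : ℝ) ≤ t / (4 * Fintype.card V) + 1)
      ≤ Real.exp (-(Real.log 2 / 48) * (t / maxHitTime (lazySRW G))) := by
  have hn : (2 : ℝ) ≤ Fintype.card V := by exact_mod_cast Fintype.one_lt_card
  have hh := two_mul_card_sub_one_le_maxHitTime hconn hreg
  have hh0 : 0 < maxHitTime (lazySRW G) := by linarith
  have hP := isTransitionMatrix_lazySRW hconn
  have hρ0 : 0 ≤ (4 * maxHitTime (lazySRW G))⁻¹ := by positivity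
  have hρ : 2 * (4 * maxHitTime (lazySRW G))⁻¹ * maxHitTime (lazySRW G) ≤ 1 := by
    field_simp; norm_num
  have hmgf := pathExpect_exp_numVisits_le hP (isStationaryDist_lazySRW hconn hreg)
    (fun z => summable_hitGT_lazySRW hconn z w) hρ0 hρ T y
  rw [unifDist, inv_inv] at hmgf
  have hstart : 1 + 2 * (4 * maxHitTime (lazySRW G))⁻¹ * expHit (lazySRW G) y w ≤ 3 / 2 := by
    have := mul_le_mul_of_nonneg_left (expHit_le_maxHitTime (P := lazySRW G) y w) hρ0
    field_simp at this ⊢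
    linarith
  calc _ ≤ _ := pathProb_numVisits_le_le_exp_mul hP.1
        (mul_nonneg hρ0 (by linarith)) w y T _
    _ ≤ _ := mul_le_mul_of_nonneg_left (hmgf.trans (mul_le_mul_of_nonneg_left hstart
        (Real.exp_pos _).le)) (Real.exp_pos _).le
    _ ≤ _ := by
        rw [← mul_assoc]
        exact few_visits_exponent_le hn hh ht (by exact_mod_cast hT)

end Main

theorem small_local_time_given_covered_general {V : Type*} [Fintype V] [DecidableEq V]
    (G : SimpleGraph V) (hconn : G.Connected) (hreg : IsRegularGraph G) :
    ∀ (x : V) (t : ℕ),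
      (∑ p : Fin (t+1) → V,
          if (∃ w : V, (localTime p w : ℝ) ≤ (t : ℝ) / (2 * (Fintype.card V : ℝ)))
              ∧ coveredByThird p then
            pathWeight (lazySRW G) x p
          else 0)
        ≤ (Fintype.card V : ℝ) *
            Real.exp (-(Real.log 2 / 48) * ((t : ℝ) / maxHitTime (lazySRW G))) *
          (∑ p : Fin (t+1) → V,
            if coveredByThird p then pathWeight (lazySRW G) x p else 0) := by
  intro x t
  rcases isEmpty_or_nonempty V with hV | hV
  · simp
  set ε := Real.exp (-(Real.log 2 / 48) * ((t : ℝ) / maxHitTime (lazySRW G)))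
  have hP := lazySRW_nonneg G
  change pathProb (lazySRW G) x t
      (fun p => (∃ w : V, (localTime p w : ℝ) ≤ (t : ℝ) / (2 * (Fintype.card V : ℝ)))
        ∧ coveredByThird p) ≤ Fintype.card V * ε * pathProb (lazySRW G) x t coveredByThird
  by_cases hε : 1 ≤ Fintype.card V * ε
  · exact (pathProb_mono hP x t fun p hp => hp.2).trans
      (le_mul_of_one_le_left (pathProb_nonneg hP x t _) hε)
  rw [not_le] at hε
  have := nontrivial_of_card_mul_exp_lt_one hε
  have hlarge := forty_eight_mul_maxHitTime_le hconn hreg hε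
  obtain ⟨s, T, rfl, hs, hsT⟩ : ∃ s T, t = s + T ∧ 3 * s ≤ s + T ∧ s + T < 3 * (s + 1) :=
    ⟨t / 3, t - t / 3, by omega, by omega, by omega⟩
  calc _ ≤ pathProb (lazySRW G) x (s + T) (fun p => Function.Surjective (firstPart p) ∧
          ∃ w, (numVisits w (lastPart p) : ℝ) ≤ ((s + T : ℕ) : ℝ) / (4 * Fintype.card V) + 1) :=
        pathProb_mono hP x _ fun p ⟨⟨w, hw⟩, hcov⟩ =>
          ⟨(coveredByThird_iff_surjective_firstPart hs hsT p).1 hcov, w,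
            numVisits_lastPart_le_of_localTime_le p w (hw.trans_eq (by ring))⟩
    _ ≤ Fintype.card V * ε * pathProb (lazySRW G) x s Function.Surjective :=
        pathProb_first_and_exists_last_le hP x _ _ fun w y =>
          pathProb_numVisits_le_lazySRW hconn hreg hlarge (by omega) w y
    _ = _ := by
        rw [← pathProb_firstPart (isTransitionMatrix_lazySRW hconn) s T]
        exact congrArg _ (pathProb_congr x _ fun p =>
          (coveredByThird_iff_surjective_firstPart hs hsT p).symm)

/-- Conditionally on covering by time `t/3`, the probability that
some vertex has local time at most `t/(2|G|)` is at most
`|G| exp(-(log 2/48) t/t_hit(G))` (stated in joint form: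
`P[A ∩ B] ≤ bound ⋅ P[B]` for the conditioning event `B = {τ_cov ≤ t/3}`). -/
theorem small_local_time_given_covered {V : Type*} [Fintype V] [DecidableEq V] [Nonempty V]
    (G : SimpleGraph V) (hconn : G.Connected) (hreg : IsRegularGraph G) :
    ∀ (x : V) (t : ℕ),
      (∑ p : Fin (t+1) → V,
          if (∃ w : V, (localTime p w : ℝ) ≤ (t : ℝ) / (2 * (Fintype.card V : ℝ)))
              ∧ coveredByThird p then
            pathWeight (lazySRW G) x p
          else 0)
        ≤ (Fintype.card V : ℝ) *
            Real.exp (-(Real.log 2 / 48) * ((t : ℝ) / maxHitTime (lazySRW G))) *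
          (∑ p : Fin (t+1) → V,
            if coveredByThird p then pathWeight (lazySRW G) x p else 0) :=
  small_local_time_given_covered_general G hconn hreg
end
end
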